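/- arXiv:2403.06777 — 3 statements merged into one kernel-verified Lean document; each statement's English description precedes it below -/
import Mathlib

section
/- For every real number Ψ and every real number Φ with Φ ∈ {0, π}, the complex identity e^{iΨΦ/π} = (1/2)·(1 + e^{iΨ} + e^{iΦ} − e^{i(Ψ+Φ)}) holds. (This is the paper's Lemma reducing 'π-pair' subterms to 'phase-pair' subterms with constant C = 1/2.) -/
open Complex Real

theorem Complex.exp_I_mul_add_pi (z : ℂ) : exp (I * (z + π)) = -exp (I * z) := by
  rw [mul_add, mul_comm I π, exp_add_pi_mul_I]

/-- π-pair subterms reduce to phase-pair subterms with constant C = 1/2: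
for Φ ∈ {0, π}, e^{iΨΦ/π} = (1/2)(1 + e^{iΨ} + e^{iΦ} − e^{i(Ψ+Φ)}). -/
theorem pi_pair_eq_phase_pair (Ψ Φ : ℝ) (hΦ : Φ = 0 ∨ Φ = Real.pi) :
    Complex.exp (Complex.I * ((Ψ * Φ / Real.pi : ℝ) : ℂ)) =
      (1 / 2) * (1 + Complex.exp (Complex.I * (Ψ : ℂ)) + Complex.exp (Complex.I * (Φ : ℂ))
        - Complex.exp (Complex.I * ((Ψ + Φ : ℝ) : ℂ))) := by
  rcases hΦ with rfl | rfl
  · simp only [mul_zero, zero_div, ofReal_zero, Complex.exp_zero, add_zero]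
    ring
  · rw [mul_div_cancel_right₀ Ψ pi_ne_zero, ofReal_add, exp_I_mul_add_pi, mul_comm I (π : ℂ),
      exp_pi_mul_I]
    ring
end

section
/- For every real number Ψ with Ψ ∈ {π/2, 3π/2}, the complex identity e^{iΨ/2} = (e^{iπ/4}/2)·(1 + e^{i(π/2 − Ψ)} + e^{iπ/2} − e^{i(π − Ψ)}) holds. (This is the paper's Lemma reducing 'half-π' subterms e^{iΨ/2}, which arise from parameterised local complementation with Image(Ψ) ⊆ {π/2, 3π/2}, to 'phase-pair' subterms with the change of variable Ψ' = −Ψ + π/2.) -/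
/-! With `Ψ' = π/2 - Ψ` and `Φ = π/2` the phase pair factors as `(1 + i)(1 + e^{-iΨ})`.
For Ψ = π/2 the second factor is `1 - i`, and `(1 + i)(1 - i) = 2`; for Ψ = 3π/2 it is `1 + i`,
and `(1 + i)² = 2i` supplies the missing `e^{iπ/2}`. -/

open Complex Real

lemma exp_I_mul_ofReal_pi_div_two : exp (I * ↑(π / 2)) = I := by
  rw [mul_comm, ofReal_div, ofReal_ofNat, exp_pi_div_two_mul_I]

lemma phase_pair_pi_div_two (ψ : ℝ) :
    1 + exp (I * ↑(π / 2 - ψ)) + exp (I * ↑(π / 2)) - exp (I * ↑(π - ψ)) =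
      (1 + I) * (1 + exp (-(I * ψ))) := by
  have h₁ : exp (I * ↑(π / 2 - ψ)) = I * exp (-(I * ψ)) := by
    rw [ofReal_sub, mul_sub, sub_eq_add_neg, Complex.exp_add, exp_I_mul_ofReal_pi_div_two]
  have h₂ : exp (I * ↑(π - ψ)) = -exp (-(I * ψ)) := by
    rw [ofReal_sub, mul_sub, sub_eq_add_neg, Complex.exp_add, mul_comm I, exp_pi_mul_I, neg_one_mul]
  rw [h₁, h₂, exp_I_mul_ofReal_pi_div_two]
  ring

/-- Half-π subterms reduce to phase-pair subterms: for Ψ ∈ {π/2, 3π/2},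
e^{iΨ/2} = (e^{iπ/4}/2)(1 + e^{i(π/2 − Ψ)} + e^{iπ/2} − e^{i(π − Ψ)}). -/
theorem half_pi_eq_phase_pair (Ψ : ℝ) (hΨ : Ψ = Real.pi / 2 ∨ Ψ = 3 * Real.pi / 2) :
    Complex.exp (Complex.I * ((Ψ / 2 : ℝ) : ℂ)) =
      (Complex.exp (Complex.I * ((Real.pi / 4 : ℝ) : ℂ)) / 2) *
        (1 + Complex.exp (Complex.I * ((Real.pi / 2 - Ψ : ℝ) : ℂ))
          + Complex.exp (Complex.I * ((Real.pi / 2 : ℝ) : ℂ))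
          - Complex.exp (Complex.I * ((Real.pi - Ψ : ℝ) : ℂ))) := by
  rw [phase_pair_pi_div_two]
  rcases hΨ with rfl | rfl
  · have hneg : exp (-(I * ↑(π / 2))) = -I := by
      rw [show -(I * ↑(π / 2)) = -π / 2 * I by push_cast; ring, exp_neg_pi_div_two_mul_I]
    rw [hneg, show π / 2 / 2 = π / 4 by ring]
    linear_combination (exp (I * ↑(π / 4)) / 2) * I_sq
  · have hneg : exp (-(I * ↑(3 * π / 2))) = I := by
      rw [show -(I * ↑(3 * π / 2)) = π / 2 * I - 2 * π * I by push_cast; ring, Complex.exp_sub,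
        exp_pi_div_two_mul_I, exp_two_pi_mul_I, div_one]
    have hhalf : exp (I * ↑(3 * π / 2 / 2)) = exp (I * ↑(π / 4)) * I := by
      rw [show I * ↑(3 * π / 2 / 2) = I * ↑(π / 4) + I * ↑(π / 2) by push_cast; ring,
        Complex.exp_add, exp_I_mul_ofReal_pi_div_two]
    rw [hneg, hhalf]
    linear_combination -(exp (I * ↑(π / 4)) / 2) * I_sq
end

section
/- Let a : ℕ → ℂ and n : ℕ, and define G : ℕ → ℕ → ℂ recursively by G 0 i = (if i < n then a i else 0), and G (k+1) i = (if 2^{k+1} divides i then G k i + G k (i + 2^k) else G k i). Then for every k and every index i divisible by 2^k, G k i = Σ_{j=0}^{2^k − 1} G 0 (i + j); in particular, for any k with 2^k ≥ n, G k 0 = Σ_{j=0}^{n−1} a j. (This is the correctness of the paper's GPU-parallelised summation algorithm, which computes the sum of an n-element array in ⌈log₂ n⌉ parallel combination rounds.) -/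
open Finset

/-! After round `k` every `2^k`-aligned position holds the sum of the `2^k` entries of the
initial array starting there: round `k + 1` glues the two adjacent `2^k`-blocks at `i` and
`i + 2^k`, both of which are `2^k`-aligned when `i` is `2^(k+1)`-aligned. Once `2^k ≥ n`, the
block at `0` covers the whole zero-padded array. -/

theorem sum_range_two_pow_of_step {M : Type*} [AddCommMonoid M] (G : ℕ → ℕ → M)
    (hstep : ∀ k i, 2 ^ (k + 1) ∣ i → G (k + 1) i = G k i + G k (i + 2 ^ k)) :
    ∀ k i, 2 ^ k ∣ i → G k i = ∑ j ∈ range (2 ^ k), G 0 (i + j) := by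
  intro k
  induction k with
  | zero => simp
  | succ k ih =>
    intro i hi
    have hi' : 2 ^ k ∣ i := (pow_dvd_pow 2 k.le_succ).trans hi
    rw [hstep k i hi, ih i hi', ih (i + 2 ^ k) (hi'.add dvd_rfl), pow_succ, mul_two,
      sum_range_add]
    simp only [add_assoc]

theorem sum_range_ite_lt_of_le {M : Type*} [AddCommMonoid M] (a : ℕ → M) {n m : ℕ}
    (h : n ≤ m) : ∑ j ∈ range m, (if j < n then a j else 0) = ∑ j ∈ range n, a j := by
  rw [← sum_filter]
  congr 1
  ext j
  simp only [mem_filter, mem_range]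
  omega

/-- Correctness of the GPU-parallelised summation algorithm: if G 0 holds the
(zero-padded) array and each round adds into every 2^{k+1}-aligned position i
the partial sum at position i + 2^k, then after k rounds every 2^k-aligned
position i holds the block sum Σ_{j<2^k} G 0 (i+j); in particular, once
2^k ≥ n, position 0 holds the total sum Σ_{j<n} a j. -/
theorem gpu_parallel_sum_correct (a : ℕ → ℂ) (n : ℕ) (G : ℕ → ℕ → ℂ)
    (h0 : ∀ i, G 0 i = if i < n then a i else 0)
    (hstep : ∀ k i, G (k + 1) i =
      if 2 ^ (k + 1) ∣ i then G k i + G k (i + 2 ^ k) else G k i) :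
    (∀ k i, 2 ^ k ∣ i → G k i = ∑ j ∈ Finset.range (2 ^ k), G 0 (i + j)) ∧
    (∀ k, n ≤ 2 ^ k → G k 0 = ∑ j ∈ Finset.range n, a j) := by
  have blocks := sum_range_two_pow_of_step G fun k i hi => by rw [hstep, if_pos hi]
  refine ⟨blocks, fun k hk => ?_⟩
  rw [blocks k 0 (dvd_zero _), ← sum_range_ite_lt_of_le a hk]
  simp only [zero_add, h0]
end
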